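/- arXiv:2403.15960 — 4 statements merged into one kernel-verified Lean document; each statement's English description precedes it below -/
import Mathlib

section
/- Let d ≥ 1 and let V be a ℚ-vector space of dimension 12d−2 equipped with а nondegenerate symmetric bilinear form of signature (2d−1, 10d−1). Then for every unipotent isometry U of V, the fixed subspace {v ∈ V : U(v) = v} has dimension at least 4d+2. -/
/-
Write `N = U - 1`. As `U` is an isometry, `N ^ k` is adjoint to `(U⁻¹ - 1) ^ k = (-U⁻¹) ^ k N ^ k`,
so `im N ^ k ⟂ ker N ^ k` for every `k`, and `T = ∑ₖ (im N ^ k ∩ ker N ^ k)` is totally isotropic.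
Over `ℝ` it meets a negative-definite subspace of dimension `10d - 1` trivially, so
`dim T ≤ 2d - 1`. On the other hand `dim V ≤ dim ker N + 2 dim T`: a Jordan block of size `s`
contributes `s` on the left and `1 + 2⌊s/2⌋` on the right. Without Jordan form this comes from the
concavity of `j ↦ dim ker N ^ j` together with the fact that `N ^ k` maps `T ∩ ker N ^ (k+1)`,
with kernel `T ∩ ker N ^ k`, onto a space containing `N ^ (2k+1) (ker N ^ (2k+2))`.
Hence `dim ker N ≥ (12d - 2) - 2(2d - 1) = 8d ≥ 4d + 2`.
-/

open TensorProduct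

/-- A subspace of a real quadratic space on which the form is positive definite. -/
def PosDefOn {V : Type*} [AddCommGroup V] [Module ℝ V]
    (B : LinearMap.BilinForm ℝ V) (W : Submodule ℝ V) : Prop :=
  ∀ w ∈ W, w ≠ 0 → 0 < B w w

/-- A subspace of a real quadratic space on which the form is negative definite. -/
def NegDefOn {V : Type*} [AddCommGroup V] [Module ℝ V]
    (B : LinearMap.BilinForm ℝ V) (W : Submodule ℝ V) : Prop :=
  ∀ w ∈ W, w ≠ 0 → B w w < 0

/-- A rational quadratic space `(V, B)` has signature `(p, q)`: the real quadratic space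
`ℝ ⊗ V` has a maximal positive-definite subspace of dimension `p` and a maximal
negative-definite subspace of dimension `q`. -/
def HasSignatureQ {V : Type*} [AddCommGroup V] [Module ℚ V]
    (B : LinearMap.BilinForm ℚ V) (p q : ℕ) : Prop :=
  (∃ W : Submodule ℝ (ℝ ⊗[ℚ] V),
      PosDefOn (LinearMap.BilinForm.baseChange ℝ B) W ∧ Module.finrank ℝ W = p) ∧
  (∀ W : Submodule ℝ (ℝ ⊗[ℚ] V),
      PosDefOn (LinearMap.BilinForm.baseChange ℝ B) W → Module.finrank ℝ W ≤ p) ∧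
  (∃ W : Submodule ℝ (ℝ ⊗[ℚ] V),
      NegDefOn (LinearMap.BilinForm.baseChange ℝ B) W ∧ Module.finrank ℝ W = q) ∧
  (∀ W : Submodule ℝ (ℝ ⊗[ℚ] V),
      NegDefOn (LinearMap.BilinForm.baseChange ℝ B) W → Module.finrank ℝ W ≤ q)

open Module LinearMap

theorem Submodule.finrank_map_add_finrank_inf_ker {K V W : Type*} [Field K]
    [AddCommGroup V] [Module K V] [FiniteDimensional K V] [AddCommGroup W] [Module K W]
    (f : V →ₗ[K] W) (p : Submodule K V) :
    finrank K (p.map f) + finrank K ↥(p ⊓ ker f) = finrank K p := by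
  have h := finrank_range_add_finrank_ker (f.domRestrict p)
  rwa [range_domRestrict, ker_domRestrict, ← Submodule.finrank_map_subtype_eq,
    Submodule.map_comap_subtype] at h

namespace Module.End

section Semiring

variable {R M : Type*} [Semiring R] [AddCommMonoid M] [Module R M] (N : Module.End R M)

def iSupRangePowInfKerPow : Submodule R M :=
  ⨆ k, range (N ^ k) ⊓ ker (N ^ k)

theorem ker_pow_le_ker_pow_succ (j : ℕ) : ker (N ^ j) ≤ ker (N ^ (j + 1)) :=
  (iterateKer N).monotone j.le_succ

theorem map_pow_succ_ker_pow_le (j : ℕ) :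
    (ker (N ^ (j + 2))).map (N ^ (j + 1)) ≤ (ker (N ^ (j + 1))).map (N ^ j) := by
  rintro _ ⟨x, hx, rfl⟩
  refine ⟨N x, ?_, ?_⟩
  · rw [SetLike.mem_coe, mem_ker, ← mul_apply, ← pow_succ]; exact hx
  · rw [← mul_apply, ← pow_succ]

theorem map_pow_ker_pow_le_iSupRangePowInfKerPow_inf (k : ℕ) :
    (ker (N ^ (2 * k + 2))).map (N ^ (2 * k + 1)) ≤
      (iSupRangePowInfKerPow N ⊓ ker (N ^ (k + 1))).map (N ^ k) := by
  rintro _ ⟨x, hx, rfl⟩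
  have hx' : (N ^ (k + 1)) ((N ^ (k + 1)) x) = 0 := by
    rw [← mul_apply, ← pow_add, show k + 1 + (k + 1) = 2 * k + 2 by ring]; exact hx
  refine ⟨(N ^ (k + 1)) x, ⟨?_, hx'⟩, ?_⟩
  · exact le_iSup (fun k ↦ range (N ^ k) ⊓ ker (N ^ k)) (k + 1) ⟨mem_range_self _ x, hx'⟩
  · rw [← mul_apply, ← pow_add, show k + (k + 1) = 2 * k + 1 by ring]

end Semiring

section Field

variable {K V : Type*} [Field K] [AddCommGroup V] [Module K V] [FiniteDimensional K V]
  (N : Module.End K V)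

theorem finrank_ker_pow_succ (j : ℕ) :
    finrank K (ker (N ^ (j + 1))) =
      finrank K ((ker (N ^ (j + 1))).map (N ^ j)) + finrank K (ker (N ^ j)) := by
  rw [← Submodule.finrank_map_add_finrank_inf_ker (N ^ j) (ker (N ^ (j + 1))),
    inf_eq_right.mpr (ker_pow_le_ker_pow_succ N j)]

theorem finrank_ker_pow_add_two_add_finrank_ker_pow_le (j : ℕ) :
    finrank K (ker (N ^ (j + 2))) + finrank K (ker (N ^ j)) ≤
      2 * finrank K (ker (N ^ (j + 1))) := by
  have := Submodule.finrank_mono (map_pow_succ_ker_pow_le N j)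
  have := finrank_ker_pow_succ N j
  have := finrank_ker_pow_succ N (j + 1)
  rw [show j + 1 + 1 = j + 2 from rfl] at this
  omega

theorem finrank_ker_pow_add_finrank_inf_ker_pow_le (k : ℕ) :
    finrank K (ker (N ^ (2 * k + 2))) + finrank K ↥(iSupRangePowInfKerPow N ⊓ ker (N ^ k)) ≤
      finrank K ↥(iSupRangePowInfKerPow N ⊓ ker (N ^ (k + 1))) +
        finrank K (ker (N ^ (2 * k + 1))) := by
  have hrestrict := Submodule.finrank_map_add_finrank_inf_ker (N ^ k)
    (iSupRangePowInfKerPow N ⊓ ker (N ^ (k + 1)))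
  rw [inf_assoc, inf_eq_right.mpr (ker_pow_le_ker_pow_succ N k)] at hrestrict
  have := Submodule.finrank_mono (map_pow_ker_pow_le_iSupRangePowInfKerPow_inf N k)
  have := finrank_ker_pow_succ N (2 * k + 1)
  rw [show 2 * k + 1 + 1 = 2 * k + 2 from rfl] at this
  omega

theorem finrank_ker_pow_two_mul_add_one_le (m : ℕ) :
    finrank K (ker (N ^ (2 * m + 1))) ≤
      finrank K (ker N) + 2 * finrank K ↥(iSupRangePowInfKerPow N ⊓ ker (N ^ m)) := by
  induction m with
  | zero => rw [mul_zero, zero_add, pow_one]; exact Nat.le_add_right _ _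
  | succ m ih =>
    have := finrank_ker_pow_add_two_add_finrank_ker_pow_le N (2 * m + 1)
    have := finrank_ker_pow_add_finrank_inf_ker_pow_le N m
    rw [show 2 * (m + 1) + 1 = 2 * m + 1 + 2 by ring]
    rw [show 2 * m + 1 + 1 = 2 * m + 2 from rfl] at *
    omega

theorem finrank_le_finrank_ker_add_two_mul_of_isNilpotent (hN : IsNilpotent N) :
    finrank K V ≤ finrank K (ker N) + 2 * finrank K (iSupRangePowInfKerPow N) := by
  obtain ⟨r, hr⟩ := hN
  have hr' : N ^ (2 * r + 1) = 0 := pow_eq_zero_of_le (by omega) hr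
  have := finrank_ker_pow_two_mul_add_one_le N r
  rwa [hr, hr', ker_zero, inf_top_eq, finrank_top] at this

end Field

end Module.End

section Isotropy

variable {R M : Type*} [CommRing R] [AddCommGroup M] [Module R M] {B : LinearMap.BilinForm R M}

theorem LinearMap.IsAdjointPair.pow {f g : Module.End R M} (h : IsAdjointPair B B f g) :
    ∀ k : ℕ, IsAdjointPair B B ⇑(f ^ k) ⇑(g ^ k)
  | 0 => isAdjointPair_one
  | k + 1 => by rw [pow_succ f, pow_succ' g]; exact (h.pow k).mul h

theorem LinearMap.IsOrthogonal.isAdjointPair_sub_one {U : M ≃ₗ[R] M} (hU : B.IsOrthogonal U) :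
    IsAdjointPair B B ⇑((U : Module.End R M) - 1) ⇑((U.symm : Module.End R M) - 1) :=
  (LinearEquiv.isAdjointPair_symm_iff (f := U.toEquiv)).mpr hU |>.sub isAdjointPair_one

theorem LinearMap.IsOrthogonal.isOrtho_pow_sub_one_apply_of_mem_ker {U : M ≃ₗ[R] M}
    (hU : B.IsOrthogonal U) (k : ℕ) (x : M) {y : M}
    (hy : y ∈ ker (((U : Module.End R M) - 1) ^ k)) :
    B ((((U : Module.End R M) - 1) ^ k) x) y = 0 := by
  set N : Module.End R M := (U : Module.End R M) - 1
  set Uinv : Module.End R M := U.symm.toLinearMap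
  have hUinv : Uinv - 1 = -Uinv * N := by
    ext z; simp [Uinv, N]
  have hcomm : Commute (-Uinv) N := by
    refine (Commute.sub_right ?_ (Commute.one_right _)).neg_left
    ext z; simp [Uinv]
  rw [hU.isAdjointPair_sub_one.pow k x y, hUinv, hcomm.mul_pow, Module.End.mul_apply,
    mem_ker.mp hy, map_zero, map_zero]

theorem Module.End.iSupRangePowInfKerPow_le_orthogonal (hB : B.IsRefl) {N : Module.End R M}
    (hN : ∀ k x, ∀ y ∈ ker (N ^ k), B ((N ^ k) x) y = 0) :
    iSupRangePowInfKerPow N ≤ B.orthogonal (iSupRangePowInfKerPow N) := by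
  have key : ∀ k l, ∀ u ∈ range (N ^ k) ⊓ ker (N ^ k), ∀ v ∈ range (N ^ l) ⊓ ker (N ^ l),
      k ≤ l → B v u = 0 := by
    rintro k l u ⟨-, hu⟩ v ⟨⟨x, rfl⟩, -⟩ hkl
    exact hN l x u ((iterateKer N).monotone hkl hu)
  refine iSup_le fun k u hu ↦ ?_
  refine (iSup_le fun l v hv ↦ ?_ : iSupRangePowInfKerPow N ≤ ker (B.flip u))
  rcases le_total k l with hkl | hlk
  · exact key k l u hu v hv hkl
  · exact hB _ _ (key l k v hv u hu hlk)

end Isotropy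

theorem LinearMap.BilinForm.baseChange_le_orthogonal {R M : Type*} (A : Type*) [CommRing R]
    [CommRing A] [Algebra R A] [AddCommGroup M] [Module R M] {B : LinearMap.BilinForm R M}
    {T : Submodule R M} (hT : T ≤ B.orthogonal T) :
    T.baseChange A ≤ (B.baseChange A).orthogonal (T.baseChange A) := by
  rw [Submodule.baseChange_eq_span, Submodule.span_le]
  rintro _ ⟨x, hx, rfl⟩
  rw [SetLike.mem_coe, mem_orthogonal_iff]
  suffices h : Submodule.span A _ ≤ ker ((B.baseChange A).flip (1 ⊗ₜ x)) from fun n hn ↦ h hn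
  rw [Submodule.span_le]
  rintro _ ⟨y, hy, rfl⟩
  rw [SetLike.mem_coe, mem_ker, flip_apply, TensorProduct.mk_apply, baseChange_tmul,
    mem_orthogonal_iff.mp (hT hx) y hy, zero_smul]

theorem Submodule.finrank_baseChange {K L V : Type*} [Field K] [Field L] [Algebra K L]
    [AddCommGroup V] [Module K V] (p : Submodule K V) :
    finrank L (p.baseChange L) = finrank K p :=
  (toBaseChange.toLinearEquiv L p).finrank_eq.symm.trans Module.finrank_baseChange

theorem NegDefOn.disjoint_of_le_orthogonal {E : Type*} [AddCommGroup E] [Module ℝ E]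
    {B : LinearMap.BilinForm ℝ E} {T W : Submodule ℝ E} (hW : NegDefOn B W)
    (hT : T ≤ B.orthogonal T) : Disjoint T W := by
  refine Submodule.disjoint_def.mpr fun x hxT hxW ↦ not_not.mp fun hx ↦ ?_
  exact (hW x hxW hx).ne (hT hxT x hxT)

open Module.End

theorem unipotent_fixed_space_dim_ge_general
    (d : ℕ) (hd : 1 ≤ d)
    (V : Type*) [AddCommGroup V] [Module ℚ V] [FiniteDimensional ℚ V]
    (hdim : Module.finrank ℚ V = 12 * d - 2)
    (B : LinearMap.BilinForm ℚ V)
    (hsymm : ∀ x y : V, B x y = B y x)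
    (hsig : HasSignatureQ B (2 * d - 1) (10 * d - 1))
    (U : V ≃ₗ[ℚ] V)
    (hisom : ∀ x y : V, B (U x) (U y) = B x y)
    (hunip : IsNilpotent ((U : V →ₗ[ℚ] V) - LinearMap.id : Module.End ℚ V)) :
    4 * d + 2 ≤
      Module.finrank ℚ (LinearMap.ker ((U : V →ₗ[ℚ] V) - LinearMap.id)) := by
  obtain ⟨-, -, ⟨W, hW, hWrank⟩, -⟩ := hsig
  set N : Module.End ℚ V := (U : V →ₗ[ℚ] V) - LinearMap.id
  have hT : iSupRangePowInfKerPow N ≤ B.orthogonal (iSupRangePowInfKerPow N) :=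
    iSupRangePowInfKerPow_le_orthogonal (fun x y h ↦ by rwa [hsymm])
      (LinearMap.IsOrthogonal.isOrtho_pow_sub_one_apply_of_mem_ker hisom)
  have hiso := Submodule.finrank_add_finrank_le_of_disjoint
    (hW.disjoint_of_le_orthogonal (B.baseChange_le_orthogonal ℝ hT))
  rw [Submodule.finrank_baseChange, hWrank, Module.finrank_baseChange, hdim] at hiso
  have hker := finrank_le_finrank_ker_add_two_mul_of_isNilpotent N hunip
  omega

/-- For a nondegenerate symmetric bilinear form of signature
`(2d-1, 10d-1)` on a `ℚ`-vector space of dimension `12d-2`, the fixed subspace of any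
unipotent isometry has dimension at least `4d+2`. -/
theorem unipotent_fixed_space_dim_ge
    (d : ℕ) (hd : 1 ≤ d)
    (V : Type*) [AddCommGroup V] [Module ℚ V] [FiniteDimensional ℚ V]
    (hdim : Module.finrank ℚ V = 12 * d - 2)
    (B : LinearMap.BilinForm ℚ V)
    (hsymm : ∀ x y : V, B x y = B y x)
    (hnondeg : ∀ v : V, (∀ w : V, B v w = 0) → v = 0)
    (hsig : HasSignatureQ B (2 * d - 1) (10 * d - 1))
    (U : V ≃ₗ[ℚ] V)
    (hisom : ∀ x y : V, B (U x) (U y) = B x y)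
    (hunip : IsNilpotent ((U : V →ₗ[ℚ] V) - LinearMap.id : Module.End ℚ V)) :
    4 * d + 2 ≤
      Module.finrank ℚ (LinearMap.ker ((U : V →ₗ[ℚ] V) - LinearMap.id)) :=
  unipotent_fixed_space_dim_ge_general d hd V hdim B hsymm hsig U hisom hunip
end

section
/- Let V be a finite-dimensional ℚ-vector space with a nondegenerate symmetric bilinear form B, and let U be a unipotent isometry of (V,B). If the restriction of B to the fixed subspace Fix(U) = {v ∈ V : U(v) = v} is positive definite or negative definite, then U is the identity. -/
/-!
For an isometry `U` with `N = U - 1`, vectors fixed by `U` are orthogonal to the range of `N`,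
since `B (U x - x) y = B (U x) (U y) - B x y = 0` when `U y = y`. So every vector of
`ker N ⊓ range N` is isotropic, and definiteness on `ker N` forces `ker N ⊓ range N = ⊥`.
Then `N (N x) = 0` implies `N x = 0`, hence `ker N ^ n = ker N` for all `n`, and nilpotency
gives `N = 0`.
-/

namespace LinearMap

theorem BilinForm.apply_eq_zero_of_mem_range_sub_id_of_mem_ker_sub_id
    {R M : Type*} [CommRing R] [AddCommGroup M] [Module R M]
    {B : LinearMap.BilinForm R M} {f : Module.End R M} (hf : ∀ x y, B (f x) (f y) = B x y)
    {x y : M} (hx : x ∈ range (f - LinearMap.id)) (hy : y ∈ ker (f - LinearMap.id)) :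
    B x y = 0 := by
  obtain ⟨z, rfl⟩ := hx
  have hfy : f y = y := sub_eq_zero.mp hy
  calc B ((f - LinearMap.id : Module.End R M) z) y = B (f z) (f y) - B z y := by
        rw [LinearMap.sub_apply, map_sub, LinearMap.sub_apply, id_apply, hfy]
    _ = 0 := by rw [hf, sub_self]

theorem eq_zero_of_isNilpotent_of_disjoint_ker_range
    {R M : Type*} [Semiring R] [AddCommMonoid M] [Module R M] {N : Module.End R M}
    (hN : IsNilpotent N) (hdisj : Disjoint (ker N) (range N)) : N = 0 := by
  have ker_pow_succ : ∀ n x, (N ^ (n + 1)) x = 0 → N x = 0 := by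
    intro n
    induction n with
    | zero => simp
    | succ n ih =>
      intro x hx
      rw [pow_succ, Module.End.mul_apply] at hx
      exact (Submodule.disjoint_def.mp hdisj) (N x) (ih (N x) hx) (mem_range_self N x)
  obtain ⟨n, hn⟩ := hN
  ext x
  exact ker_pow_succ n x (by rw [pow_succ, hn, zero_mul, zero_apply])

end LinearMap

theorem unipotent_definite_fixed_space_eq_id_general
    (V : Type*) [AddCommGroup V] [Module ℚ V]
    (B : LinearMap.BilinForm ℚ V)
    (U : V ≃ₗ[ℚ] V)
    (hisom : ∀ x y : V, B (U x) (U y) = B x y)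
    (hunip : IsNilpotent ((U : V →ₗ[ℚ] V) - LinearMap.id : Module.End ℚ V))
    (hdef : (∀ v ∈ LinearMap.ker ((U : V →ₗ[ℚ] V) - LinearMap.id), v ≠ 0 → 0 < B v v) ∨
            (∀ v ∈ LinearMap.ker ((U : V →ₗ[ℚ] V) - LinearMap.id), v ≠ 0 → B v v < 0)) :
    U = LinearEquiv.refl ℚ V := by
  have hdisj : Disjoint (LinearMap.ker ((U : V →ₗ[ℚ] V) - LinearMap.id))
      (LinearMap.range ((U : V →ₗ[ℚ] V) - LinearMap.id)) := by
    refine Submodule.disjoint_def.mpr fun v hker hrange => ?_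
    have hiso : B v v = 0 :=
      LinearMap.BilinForm.apply_eq_zero_of_mem_range_sub_id_of_mem_ker_sub_id hisom hrange hker
    by_contra hv
    rcases hdef with hpos | hneg
    · exact (hpos v hker hv).ne' hiso
    · exact (hneg v hker hv).ne hiso
  have hN : (U : V →ₗ[ℚ] V) - LinearMap.id = 0 :=
    LinearMap.eq_zero_of_isNilpotent_of_disjoint_ker_range hunip hdisj
  ext v
  exact sub_eq_zero.mp (congrArg (· v) hN)

/-- If the restriction of a nondegenerate symmetric bilinear form on a
finite-dimensional `ℚ`-vector space to the fixed subspace of a unipotent isometry `U` is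
positive definite or negative definite, then `U` is the identity. -/
theorem unipotent_definite_fixed_space_eq_id
    (V : Type*) [AddCommGroup V] [Module ℚ V] [FiniteDimensional ℚ V]
    (B : LinearMap.BilinForm ℚ V)
    (hsymm : ∀ x y : V, B x y = B y x)
    (hnondeg : ∀ v : V, (∀ w : V, B v w = 0) → v = 0)
    (U : V ≃ₗ[ℚ] V)
    (hisom : ∀ x y : V, B (U x) (U y) = B x y)
    (hunip : IsNilpotent ((U : V →ₗ[ℚ] V) - LinearMap.id : Module.End ℚ V))
    (hdef : (∀ v ∈ LinearMap.ker ((U : V →ₗ[ℚ] V) - LinearMap.id), v ≠ 0 → 0 < B v v) ∨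
            (∀ v ∈ LinearMap.ker ((U : V →ₗ[ℚ] V) - LinearMap.id), v ≠ 0 → B v v < 0)) :
    U = LinearEquiv.refl ℚ V :=
  unipotent_definite_fixed_space_eq_id_general V B U hisom hunip hdef
end

section
/- Let L be a unimodular lattice and e ∈ L a primitive isotropic vector. An isometry g of L satisfies g(e) = e and induces the identity on e^⊥/ℤe if and only if g = E(e,c̃) for some c̃ ∈ e^⊥ with c̃² even. Moreover E(e,c̃) = E(e,c̃') if and only if c̃ − c̃' ∈ ℤe; hence c̃ ↦ E(e,c̃) induces a group isomorphism from {c̃ ∈ e^⊥ : c̃² even}/ℤe onto the group of isometries of L that fix e and act trivially on e^⊥/ℤe. -/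
/-!
Pick `f` with `f·e = 1`: if `d` generates the ideal of values of `e·−`, unimodularity writes
`e·− = d (y·−)`, so `e = d y` and primitivity forces `d = ±1`. Then `L = ℤf ⊕ e^⊥`, so a linear
map is determined by its values on `f` and on `e^⊥`. An isometry `g` fixing `e` and acting
trivially on `e^⊥/ℤe` agrees with `E(e, g f − f)` on both pieces, and the isometry condition for
`g f` is what makes `(g f − f)²` even. Conversely `E(e,c̃)` fixes `e` and moves `e^⊥` by multiples
of `e`. Finally `E(e,c̃) f = f + c̃ − (f·c̃ + ½c̃²) e` determines `c̃` modulo `ℤe`, while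
`E(e, c̃ + n e) = E(e, c̃)` because `(c̃ + n e)² = c̃²`.
-/

/-- The Eichler transformation `E(e,c̃) : x ↦ x + (x·e)·c̃ − (x·c̃)·e − ½(c̃·c̃)(x·e)·e`. -/
def eichler {L : Type*} [AddCommGroup L] [inst : Module ℤ L]
    (B : LinearMap.BilinForm ℤ L) (e c : L) : L →ₗ[ℤ] L :=
  haveI := @IsScalarTower.left ℤ L _ inst.toMulAction
  LinearMap.id + (B.flip e).smulRight c - (B.flip c).smulRight e
    - (B c c / 2) • (B.flip e).smulRight e

def IsPrimitiveVec {L : Type*} [AddCommGroup L] [Module ℤ L] (e : L) : Prop :=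
  ∀ (n : ℤ) (x : L), e = n • x → n = 1 ∨ n = -1

namespace LinearMap.BilinForm

variable {L : Type*} [AddCommGroup L] [Module ℤ L] (B : LinearMap.BilinForm ℤ L)

theorem exists_eq_smul_of_forall_dvd (hB : Function.Bijective B) {e : L} {d : ℤ}
    (hd : ∀ x : L, d ∣ B e x) : ∃ y, e = d • y := by
  rcases eq_or_ne d 0 with rfl | hd0
  · refine ⟨0, hB.injective ?_⟩
    ext x
    simpa using hd x
  let ψ : L →ₗ[ℤ] ℤ :=
    { toFun := fun x => B e x / d
      map_add' := fun x y => by rw [map_add, Int.add_ediv_of_dvd_left (hd x)]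
      map_smul' := fun n x => by simp [Int.mul_ediv_assoc n (hd x)] }
  obtain ⟨y, hy⟩ := hB.surjective ψ
  refine ⟨y, hB.injective ?_⟩
  ext x
  simp [hy, ψ, Int.mul_ediv_cancel' (hd x)]

theorem exists_apply_eq_one_of_isPrimitiveVec (hB : Function.Bijective B) {e : L}
    (he : IsPrimitiveVec e) : ∃ f, B e f = 1 := by
  let I : Ideal ℤ := LinearMap.range (B e)
  obtain ⟨f, hf⟩ : Submodule.IsPrincipal.generator I ∈ I := Submodule.IsPrincipal.generator_mem I
  obtain ⟨y, hy⟩ := exists_eq_smul_of_forall_dvd B hB fun x =>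
    (Submodule.IsPrincipal.mem_iff_generator_dvd I).mp ⟨x, rfl⟩
  refine ⟨Submodule.IsPrincipal.generator I • f, ?_⟩
  rcases he _ y hy with h | h <;> simp [hf, h]

theorem linearMap_ext_of_eq_on_orthogonal {M : Type*} [AddCommGroup M] [Module ℤ M] {e f : L}
    (hf : B f e = 1) {φ ψ : L →ₗ[ℤ] M} (hφψ : φ f = ψ f)
    (horth : ∀ x : L, B x e = 0 → φ x = ψ x) : φ = ψ := by
  ext x
  have hx : B (x - B x e • f) e = 0 := by simp [hf]
  calc φ x = B x e • φ f + φ (x - B x e • f) := by simp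
    _ = B x e • ψ f + ψ (x - B x e • f) := by rw [hφψ, horth _ hx]
    _ = ψ x := by simp

-- `•` in the statements is `zsmul`, which agrees with the scalar action of the `Module ℤ L`
-- instance used inside `eichler` only propositionally.
theorem eichler_apply (e c x : L) :
    eichler B e c x = x + B x e • c - B x c • e - (B x e * (B c c / 2)) • e := by
  obtain rfl : ‹Module ℤ L› = AddCommGroup.toIntModule L := Subsingleton.elim _ _
  simp [eichler, mul_zsmul]

theorem eichler_apply_of_orthogonal {e x : L} (c : L) (hx : B x e = 0) :
    eichler B e c x = x - B x c • e := by
  simp [eichler_apply, hx]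

theorem eichler_apply_of_apply_eq_one {e f : L} (c : L) (hf : B f e = 1) :
    eichler B e c f = f + c - (B f c + B c c / 2) • e := by
  rw [eichler_apply, hf, one_mul, one_zsmul, add_zsmul]
  abel

theorem eichler_add_smul {e c : L} (hee : B e e = 0) (hce : B c e = 0) (hec : B e c = 0)
    (n : ℤ) : eichler B e (c + n • e) = eichler B e c := by
  have hcc : B (c + n • e) (c + n • e) = B c c := by simp [hee, hce, hec]
  ext x
  have hxc : B x (c + n • e) = B x c + n * B x e := by simp
  rw [eichler_apply, eichler_apply, hcc, hxc, zsmul_add, add_zsmul, ← mul_zsmul, mul_comm n]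
  abel

theorem eichler_apply_self {e : L} (c : L) (hee : B e e = 0) (hec : B e c = 0) :
    eichler B e c e = e := by
  simp [eichler_apply_of_orthogonal B c hee, hec]

theorem exists_sub_eq_smul_of_eichler_eq {e f c c' : L} (hf : B f e = 1)
    (h : eichler B e c = eichler B e c') : ∃ n : ℤ, c - c' = n • e := by
  refine ⟨B f c + B c c / 2 - (B f c' + B c' c' / 2), ?_⟩
  have hcf := LinearMap.congr_fun h f
  rw [eichler_apply_of_apply_eq_one B c hf, eichler_apply_of_apply_eq_one B c' hf] at hcf
  rw [sub_zsmul]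
  linear_combination (norm := abel) hcf

section Isometry

variable {B} {g : L →ₗ[ℤ] L} {e : L}

theorem apply_sub_self_orthogonal (hg : ∀ x y : L, B (g x) (g y) = B x y) (hge : g e = e)
    (f : L) : B (g f - f) e = 0 := by
  have := hg f e
  rw [hge] at this
  simp [this]

theorem apply_sub_self_self (hsymm : ∀ x y : L, B x y = B y x)
    (hg : ∀ x y : L, B (g x) (g y) = B x y) (f : L) :
    B (g f - f) (g f - f) = 2 * (B f f - B f (g f)) := by
  have := hg f f
  simp only [map_sub, LinearMap.sub_apply, hsymm (g f) f] at this ⊢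
  linarith

theorem eq_eichler_apply_sub_self (hsymm : ∀ x y : L, B x y = B y x)
    (hg : ∀ x y : L, B (g x) (g y) = B x y) (hge : g e = e)
    (htriv : ∀ x : L, B x e = 0 → ∃ n : ℤ, g x = x + n • e) {f : L} (hf : B f e = 1) :
    g = eichler B e (g f - f) := by
  refine linearMap_ext_of_eq_on_orthogonal B hf ?_ fun x hx => ?_
  · rw [eichler_apply_of_apply_eq_one B _ hf, apply_sub_self_self hsymm hg f,
      Int.mul_ediv_cancel_left _ two_ne_zero]
    simp
  · have hegf : B e (g f) = 1 := by rw [← hge, hg, hsymm, hf]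
    obtain ⟨n, hn⟩ := htriv x hx
    have hxg := hg x f
    simp only [hn, map_add, map_zsmul, LinearMap.add_apply, LinearMap.smul_apply, hegf,
      smul_eq_mul, mul_one] at hxg
    rw [hn, eichler_apply_of_orthogonal B _ hx, map_sub, sub_eq_add_neg, ← neg_zsmul]
    congr 2
    linarith

end Isometry

end LinearMap.BilinForm

open LinearMap.BilinForm in
theorem eichler_characterization_general
    (L : Type*) [AddCommGroup L] [Module ℤ L]
    (B : LinearMap.BilinForm ℤ L)
    (hsymm : ∀ x y : L, B x y = B y x)
    (hunimodular : Function.Bijective B)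
    (e : L) (hprim : IsPrimitiveVec e) (hiso : B e e = 0) :
    (∀ g : L ≃ₗ[ℤ] L, (∀ x y : L, B (g x) (g y) = B x y) →
      ((g e = e ∧ ∀ x : L, B x e = 0 → ∃ n : ℤ, g x = x + n • e) ↔
        (∃ c : L, B c e = 0 ∧ Even (B c c) ∧ ∀ x : L, g x = eichler B e c x))) ∧
    (∀ c c' : L, B c e = 0 → B c' e = 0 → Even (B c c) → Even (B c' c') →
      (eichler B e c = eichler B e c' ↔ ∃ n : ℤ, c - c' = n • e)) := by
  obtain ⟨f, hef⟩ := exists_apply_eq_one_of_isPrimitiveVec B hunimodular hprim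
  have hf : B f e = 1 := by rw [hsymm, hef]
  refine ⟨fun g hg => ⟨fun ⟨hge, htriv⟩ => ?_, fun ⟨c, hce, _, hgc⟩ => ?_⟩,
    fun c c' _ hc'e _ _ => ⟨exists_sub_eq_smul_of_eichler_eq B hf, ?_⟩⟩
  · have hcc := apply_sub_self_self hsymm hg f
    refine ⟨g f - f, apply_sub_self_orthogonal hg hge f, ⟨_, hcc.trans (two_mul _)⟩, ?_⟩
    exact LinearMap.congr_fun (eq_eichler_apply_sub_self (g := g.toLinearMap) hsymm hg hge htriv hf)
  · have hgc : ⇑g = eichler B e c := funext hgc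
    refine ⟨hgc ▸ eichler_apply_self B c hiso (by rw [hsymm, hce]), fun x hx => ⟨-B x c, ?_⟩⟩
    rw [hgc, eichler_apply_of_orthogonal B c hx, neg_zsmul, sub_eq_add_neg]
  · rintro ⟨n, hn⟩
    rw [eq_add_of_sub_eq' hn, eichler_add_smul B hiso hc'e (by rw [hsymm, hc'e])]

/-- In a unimodular lattice `L` with `e` primitive isotropic, an isometry
`g` fixes `e` and acts trivially on `e^⊥/ℤe` iff it is an Eichler transformation
`E(e,c̃)` with `c̃ ∈ e^⊥` of even square; moreover `E(e,c̃) = E(e,c̃')` iff `c̃ − c̃' ∈ ℤe`,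
so `c̃ ↦ E(e,c̃)` induces a group isomorphism from `{c̃ ∈ e^⊥ : c̃² even}/ℤe` onto the
group of isometries of `L` fixing `e` and acting trivially on `e^⊥/ℤe`. -/
theorem eichler_characterization
    (L : Type*) [AddCommGroup L] [Module ℤ L] [Module.Free ℤ L] [Module.Finite ℤ L]
    (B : LinearMap.BilinForm ℤ L)
    (hsymm : ∀ x y : L, B x y = B y x)
    (hunimodular : Function.Bijective B)
    (e : L) (hprim : IsPrimitiveVec e) (hiso : B e e = 0) :
    (∀ g : L ≃ₗ[ℤ] L, (∀ x y : L, B (g x) (g y) = B x y) →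
      ((g e = e ∧ ∀ x : L, B x e = 0 → ∃ n : ℤ, g x = x + n • e) ↔
        (∃ c : L, B c e = 0 ∧ Even (B c c) ∧ ∀ x : L, g x = eichler B e c x))) ∧
    (∀ c c' : L, B c e = 0 → B c' e = 0 → Even (B c c) → Even (B c' c') →
      (eichler B e c = eichler B e c' ↔ ∃ n : ℤ, c - c' = n • e)) :=
  eichler_characterization_general L B hsymm hunimodular e hprim hiso
end

section
/- For every d ≥ 1, the lattice d·E8(−1) ⊥ (2d−2)·U, the orthogonal direct sum of d copies of E8(−1) and 2d−2 copies of U, admits a ℤ-basis consisting entirely of (−2)-vectors. -/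
/-- The Cartan matrix of `E8` (nodes `0–1–2–3–4–5–6` a chain, node `7` attached to
node `2`, so the three legs at the branch node have lengths `1`, `2`, `4`). -/
def E8Cartan : Matrix (Fin 8) (Fin 8) ℤ :=
  !![ 2, -1,  0,  0,  0,  0,  0,  0;
     -1,  2, -1,  0,  0,  0,  0,  0;
      0, -1,  2, -1,  0,  0,  0, -1;
      0,  0, -1,  2, -1,  0,  0,  0;
      0,  0,  0, -1,  2, -1,  0,  0;
      0,  0,  0,  0, -1,  2, -1,  0;
      0,  0,  0,  0,  0, -1,  2,  0;
      0,  0, -1,  0,  0,  0,  0,  2]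

/-- The underlying `ℤ`-module of the orthogonal direct sum of `d` copies of `E8(−1)`
and `2d−2` copies of the hyperbolic plane `U`. -/
abbrev LatticeDE8U (d : ℕ) : Type := (Fin d → Fin 8 → ℤ) × (Fin (2 * d - 2) → ℤ × ℤ)

/-- The bilinear form of `d·E8(−1) ⊥ (2d−2)·U`. -/
def formDE8U (d : ℕ) (x y : LatticeDE8U d) : ℤ :=
  (∑ k, ∑ i, ∑ j, x.1 k i * (-(E8Cartan i j)) * y.1 k j)
    + ∑ k, ((x.2 k).1 * (y.2 k).2 + (x.2 k).2 * (y.2 k).1)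

/-!
Start from the standard basis: the simple roots of each `E8(−1)` summand and the vectors
`f = (1, 0)`, `g = (0, 1)` of each copy of `U`. The roots already have square `−2`. Fix a root
`r` of the first `E8(−1)` summand and replace, in every copy of `U`, `f` by `f − g` (square `−2`)
and `g` by `r + f` (square `r² + f² = −2`). This change of basis is unimodular, being a
transvection by `r` composed with the automorphism `(a, b) ↦ (a + b, −a)` of each `U`.
-/

namespace DE8U

variable {d : ℕ}

lemma E8Cartan_diag (i : Fin 8) : E8Cartan i i = 2 := by
  fin_cases i <;> rfl

lemma formDE8U_self_simpleRoot (k : Fin d) (i : Fin 8) :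
    formDE8U d (Pi.single k (Pi.single i 1), 0) (Pi.single k (Pi.single i 1), 0) = -2 := by
  rw [formDE8U, Fintype.sum_eq_single k fun k' hk' => by simp [Pi.single_eq_of_ne hk']]
  simp [Pi.single_apply, E8Cartan_diag]

lemma formDE8U_self_single_hyperbolic (x : Fin d → Fin 8 → ℤ) (k : Fin (2 * d - 2)) (a b : ℤ) :
    formDE8U d (x, Pi.single k (a, b)) (x, Pi.single k (a, b)) =
      formDE8U d (x, 0) (x, 0) + 2 * a * b := by
  rw [formDE8U, formDE8U, Fintype.sum_eq_single k fun k' hk' => by simp [Pi.single_eq_of_ne hk']]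
  simp only [Pi.single_eq_same, Pi.zero_apply, Prod.fst_zero, Prod.snd_zero, mul_zero, add_zero,
    Finset.sum_const_zero]
  ring

def shear (r : Fin d → Fin 8 → ℤ) : LatticeDE8U d ≃ₗ[ℤ] LatticeDE8U d where
  toFun p := (p.1 + (∑ k, (p.2 k).2) • r, fun k => ((p.2 k).1 + (p.2 k).2, -(p.2 k).1))
  invFun p := (p.1 - (∑ k, ((p.2 k).1 + (p.2 k).2)) • r,
    fun k => (-(p.2 k).2, (p.2 k).1 + (p.2 k).2))
  map_add' p q := by
    ext <;> simp [Finset.sum_add_distrib, add_smul] <;> ring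
  map_smul' c p := by
    ext <;> simp [← Finset.mul_sum, mul_smul]; ring
  left_inv p := by
    ext <;> simp
  right_inv p := by
    ext <;> simp

abbrev Index (d : ℕ) : Type := (Σ _ : Fin d, Fin 8) ⊕ (Σ _ : Fin (2 * d - 2), Fin 2)

lemma card_index : Fintype.card (Index d) = 12 * d - 4 := by
  simp only [Fintype.card_sum, Fintype.card_sigma, Fintype.card_fin, Finset.sum_const,
    Finset.card_univ, smul_eq_mul]
  omega

noncomputable def stdBasis (d : ℕ) : Module.Basis (Index d) ℤ (LatticeDE8U d) :=
  (Pi.basis fun _ => Pi.basisFun ℤ (Fin 8)).prod (Pi.basis fun _ => Module.Basis.finTwoProd ℤ)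

lemma stdBasis_inl (k : Fin d) (i : Fin 8) :
    stdBasis d (.inl ⟨k, i⟩) = (Pi.single k (Pi.single i 1), 0) := by
  ext <;> simp [stdBasis, Pi.single_apply]

lemma stdBasis_inr_zero (k : Fin (2 * d - 2)) :
    stdBasis d (.inr ⟨k, 0⟩) = (0, Pi.single k (1, 0)) := by
  ext <;> simp [stdBasis, Pi.single_apply]

lemma stdBasis_inr_one (k : Fin (2 * d - 2)) :
    stdBasis d (.inr ⟨k, 1⟩) = (0, Pi.single k (0, 1)) := by
  ext <;> simp [stdBasis, Pi.single_apply]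

lemma shear_mk_zero (r : Fin d → Fin 8 → ℤ) (x : Fin d → Fin 8 → ℤ) : shear r (x, 0) = (x, 0) := by
  ext <;> simp [shear]

lemma shear_single_one_zero (r : Fin d → Fin 8 → ℤ) (k : Fin (2 * d - 2)) :
    shear r (0, Pi.single k (1, 0)) = (0, Pi.single k (1, -1)) := by
  ext j
  · simp [shear, ← Prod.snd_sum]
  all_goals rcases eq_or_ne j k with rfl | hj <;> simp [shear, *]

lemma shear_single_zero_one (r : Fin d → Fin 8 → ℤ) (k : Fin (2 * d - 2)) :
    shear r (0, Pi.single k (0, 1)) = (r, Pi.single k (1, 0)) := by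
  ext <;> simp [shear, ← Prod.snd_sum, Pi.single_apply, apply_ite]

lemma formDE8U_shear_stdBasis_self {r : Fin d → Fin 8 → ℤ} (hr : formDE8U d (r, 0) (r, 0) = -2)
    (i : Index d) : formDE8U d (shear r (stdBasis d i)) (shear r (stdBasis d i)) = -2 := by
  match i with
  | .inl ⟨k, i⟩ => rw [stdBasis_inl, shear_mk_zero, formDE8U_self_simpleRoot]
  | .inr ⟨k, 0⟩ =>
    rw [stdBasis_inr_zero, shear_single_one_zero, formDE8U_self_single_hyperbolic]
    simp [formDE8U]
  | .inr ⟨k, 1⟩ =>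
    rw [stdBasis_inr_one, shear_single_zero_one, formDE8U_self_single_hyperbolic, hr]
    ring

end DE8U

/-- For every `d ≥ 1`, the lattice `d·E8(−1) ⊥ (2d−2)·U` admits a
`ℤ`-basis consisting entirely of `(−2)`-vectors. -/
theorem dE8U_basis_of_minus_two_vectors (d : ℕ) (hd : 1 ≤ d) :
    ∃ b : Module.Basis (Fin (12 * d - 4)) ℤ (LatticeDE8U d),
      ∀ k, formDE8U d (b k) (b k) = -2 := by
  let r : Fin d → Fin 8 → ℤ := Pi.single ⟨0, hd⟩ (Pi.single 0 1)
  let e := Fintype.equivFinOfCardEq (DE8U.card_index (d := d))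
  refine ⟨((DE8U.stdBasis d).map (DE8U.shear r)).reindex e, fun k => ?_⟩
  rw [Module.Basis.reindex_apply, Module.Basis.map_apply]
  exact DE8U.formDE8U_shear_stdBasis_self (DE8U.formDE8U_self_simpleRoot _ _) _
end
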